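/- The Dunkl Szász–Kantorovich–Stancu operators T_n* satisfy T_n*(1;x) = 1 and T_n*(t;x) = (n/(n+β))x + (α + 1/2)/(n+β) for all x ≥ 0 and n ∈ ℕ. -/

import Mathlib

noncomputable section

/-- θ_k = 0 if k even, 1 if k odd. -/
def theta (k : ℕ) : ℝ := if Even k then 0 else 1

/-- Dunkl coefficients γ_μ(n). -/
def gammaD (mu : ℝ) (n : ℕ) : ℝ :=
  if Even n then
    2 ^ n * (Nat.factorial (n / 2)) * Real.Gamma ((n / 2 : ℕ) + mu + 1 / 2) / Real.Gamma (mu + 1 / 2)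
  else
    2 ^ n * (Nat.factorial (n / 2)) * Real.Gamma ((n / 2 : ℕ) + mu + 3 / 2) / Real.Gamma (mu + 1 / 2)

/-- Dunkl exponential e_μ(x) = Σ xⁿ/γ_μ(n). -/
def eD (mu x : ℝ) : ℝ := ∑' n : ℕ, x ^ n / gammaD mu n

/-- r_n(x) = x - 1/(2n). -/
def rn (n : ℕ) (x : ℝ) : ℝ := x - 1 / (2 * n)

/-- Modified Dunkl Szász–Mirakjan–Kantorovich operator K_n. -/
def Kn (mu : ℝ) (n : ℕ) (f : ℝ → ℝ) (x : ℝ) : ℝ :=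
  (n / eD mu (n * rn n x)) * ∑' k : ℕ, (n * rn n x) ^ k / gammaD mu k *
    ∫ t in (((k : ℝ) + 2 * mu * theta k) / n)..(((k : ℝ) + 1 + 2 * mu * theta k) / n), f t

/-- Stancu-type modified Dunkl Szász–Kantorovich operator K_n^*. -/
def KnStar (mu a b : ℝ) (n : ℕ) (f : ℝ → ℝ) (x : ℝ) : ℝ :=
  (n / eD mu (n * rn n x)) * ∑' k : ℕ, (n * rn n x) ^ k / gammaD mu k *
    ∫ t in (((k : ℝ) + 2 * mu * theta k) / n)..(((k : ℝ) + 1 + 2 * mu * theta k) / n),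
      f ((n * t + a) / (n + b))

/-- Dunkl Szász–Kantorovich–Stancu operator T_n^*. -/
def TnStar (mu a b : ℝ) (n : ℕ) (f : ℝ → ℝ) (x : ℝ) : ℝ :=
  (n / eD mu (n * x)) * ∑' k : ℕ, (n * x) ^ k / gammaD mu k *
    ∫ t in (((k : ℝ) + 2 * mu * theta k) / n)..(((k : ℝ) + 1 + 2 * mu * theta k) / n),
      f ((n * t + a) / (n + b))

/-- Modulus of continuity of f on [0,∞). -/
def modCont (f : ℝ → ℝ) (d : ℝ) : ℝ :=
  sSup {y | ∃ t s : ℝ, 0 ≤ t ∧ 0 ≤ s ∧ |t - s| ≤ d ∧ y = |f t - f s|}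

/-!
With y = n x and weights w_k = y^k / γ_μ(k), the weights sum to e_μ(y), and the recursion
γ_μ(k+1) = (k + 1 + 2μθ_{k+1}) γ_μ(k) gives Σ_k (k + 2μθ_k) w_k = y e_μ(y), the Dunkl analogue of
y (d/dy) e^y = y e^y. The k-th integration cell has length 1/n and midpoint (k + 2μθ_k + 1/2)/n, so
T_n* reproduces constants, and the affine Stancu map t ↦ (n t + α)/(n + β) sends the identity to
(n x + α + 1/2)/(n + β).
-/

lemma theta_zero : theta 0 = 0 := by simp [theta]

lemma two_mul_mul_theta_nonneg {mu : ℝ} (hmu : 0 ≤ mu) (k : ℕ) : 0 ≤ 2 * mu * theta k := by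
  unfold theta; split <;> positivity

lemma gammaD_zero {mu : ℝ} (hmu : 0 ≤ mu) : gammaD mu 0 = 1 := by
  have h : Real.Gamma (mu + 1 / 2) ≠ 0 := (Real.Gamma_pos_of_pos (by linarith)).ne'
  simpa [gammaD] using h

lemma gammaD_succ {mu : ℝ} (hmu : 0 ≤ mu) (k : ℕ) :
    gammaD mu (k + 1) = ((k : ℝ) + 1 + 2 * mu * theta (k + 1)) * gammaD mu k := by
  rcases Nat.even_or_odd k with ⟨m, rfl⟩ | ⟨m, rfl⟩
  · have heven : Even (m + m) := ⟨m, rfl⟩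
    have hodd : ¬ Even (m + m + 1) := by simp
    have hGamma : Real.Gamma ((m : ℝ) + mu + 3 / 2) =
        ((m : ℝ) + mu + 1 / 2) * Real.Gamma ((m : ℝ) + mu + 1 / 2) := by
      rw [show (m : ℝ) + mu + 3 / 2 = ((m : ℝ) + mu + 1 / 2) + 1 by ring,
        Real.Gamma_add_one (by positivity)]
    simp only [gammaD, theta, show (m + m + 1) / 2 = m by omega, show (m + m) / 2 = m by omega,
      if_neg hodd, if_pos heven, hGamma]
    push_cast
    ring
  · have heven : Even (2 * m + 1 + 1) := ⟨m + 1, by ring⟩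
    have hodd : ¬ Even (2 * m + 1) := by simp [parity_simps]
    simp only [gammaD, theta, show (2 * m + 1 + 1) / 2 = m + 1 by omega,
      show (2 * m + 1) / 2 = m by omega, if_pos heven, if_neg hodd]
    rw [show ((m + 1 : ℕ) : ℝ) + mu + 1 / 2 = (m : ℝ) + mu + 3 / 2 by push_cast; ring]
    push_cast [Nat.factorial_succ]
    ring

lemma gammaD_pos {mu : ℝ} (hmu : 0 ≤ mu) (k : ℕ) : 0 < gammaD mu k := by
  induction k with
  | zero => simp [gammaD_zero hmu]
  | succ k ih =>
    rw [gammaD_succ hmu]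
    exact mul_pos (add_pos_of_pos_of_nonneg (by positivity) (two_mul_mul_theta_nonneg hmu _)) ih

lemma factorial_le_gammaD {mu : ℝ} (hmu : 0 ≤ mu) (k : ℕ) : (k.factorial : ℝ) ≤ gammaD mu k := by
  induction k with
  | zero => simp [gammaD_zero hmu]
  | succ k ih =>
    rw [gammaD_succ hmu, Nat.factorial_succ, Nat.cast_mul, Nat.cast_succ]
    have hstep := le_add_of_nonneg_right (a := (k : ℝ) + 1) (two_mul_mul_theta_nonneg hmu (k + 1))
    exact mul_le_mul hstep ih (by positivity) ((by positivity : (0 : ℝ) ≤ k + 1).trans hstep)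

lemma summable_pow_div_gammaD {mu : ℝ} (hmu : 0 ≤ mu) (y : ℝ) :
    Summable fun k : ℕ => y ^ k / gammaD mu k := by
  refine Summable.of_norm_bounded (Real.summable_pow_div_factorial |y|) fun k => ?_
  rw [norm_div, norm_pow, Real.norm_eq_abs, Real.norm_of_nonneg (gammaD_pos hmu k).le]
  gcongr
  exact factorial_le_gammaD hmu k

lemma one_le_eD {mu : ℝ} (hmu : 0 ≤ mu) {y : ℝ} (hy : 0 ≤ y) : 1 ≤ eD mu y := by
  simpa [gammaD_zero hmu, eD] using (summable_pow_div_gammaD hmu y).le_tsum 0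
    fun k _ => div_nonneg (pow_nonneg hy k) (gammaD_pos hmu k).le

lemma hasSum_eD {mu : ℝ} (hmu : 0 ≤ mu) (y : ℝ) :
    HasSum (fun k : ℕ => y ^ k / gammaD mu k) (eD mu y) :=
  (summable_pow_div_gammaD hmu y).hasSum

lemma hasSum_pow_mul_div_gammaD {mu : ℝ} (hmu : 0 ≤ mu) (y : ℝ) :
    HasSum (fun k : ℕ => y ^ k * ((k : ℝ) + 2 * mu * theta k) / gammaD mu k) (y * eD mu y) := by
  have hshift (k : ℕ) : y ^ (k + 1) * (((k + 1 : ℕ) : ℝ) + 2 * mu * theta (k + 1)) /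
      gammaD mu (k + 1) = y * (y ^ k / gammaD mu k) := by
    have : (k : ℝ) + 1 + 2 * mu * theta (k + 1) ≠ 0 :=
      (add_pos_of_pos_of_nonneg (by positivity) (two_mul_mul_theta_nonneg hmu _)).ne'
    rw [gammaD_succ hmu, pow_succ, Nat.cast_succ]
    field_simp [(gammaD_pos hmu k).ne']
  have h := (hasSum_eD hmu y).mul_left y
  simp_rw [← hshift] at h
  refine (hasSum_nat_add_iff' 1).mp ?_
  simpa [theta_zero] using h

lemma integral_one_cell (n c : ℝ) : ∫ _ in c / n..(c + 1) / n, (1 : ℝ) = 1 / n := by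
  rw [intervalIntegral.integral_const, smul_eq_mul, mul_one]
  ring

lemma integral_affine_cell (n a c : ℝ) (hn : n ≠ 0) :
    ∫ t in c / n..(c + 1) / n, (n * t + a) = (c + a + 1 / 2) / n := by
  rw [intervalIntegral.integral_add (intervalIntegral.intervalIntegrable_id.const_mul n)
    intervalIntegrable_const, intervalIntegral.integral_const_mul, integral_id,
    intervalIntegral.integral_const, smul_eq_mul]
  field_simp
  ring

theorem TnStar_one_and_id_general (mu a b : ℝ) (hmu : 0 ≤ mu)
    (n : ℕ) (hn : 0 < n) (x : ℝ) (hx : 0 ≤ x) :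
    TnStar mu a b n (fun _ => 1) x = 1 ∧
    TnStar mu a b n (fun t => t) x = (n / (n + b)) * x + (a + 1 / 2) / (n + b) := by
  have hn0 : (n : ℝ) ≠ 0 := by positivity
  have he : eD mu (n * x) ≠ 0 := (one_pos.trans_le (one_le_eD hmu (by positivity))).ne'
  have hupper (k : ℕ) : (k : ℝ) + 1 + 2 * mu * theta k = (k + 2 * mu * theta k) + 1 := by ring
  unfold TnStar
  simp_rw [hupper]
  constructor
  · simp_rw [integral_one_cell]
    rw [tsum_mul_right, ← eD]
    field_simp
  · simp_rw [intervalIntegral.integral_div, integral_affine_cell _ _ _ hn0]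
    have hsum := ((hasSum_pow_mul_div_gammaD hmu (n * x)).add
      ((hasSum_eD hmu (n * x)).mul_left (a + 1 / 2))).div_const n |>.div_const (n + b)
    rw [(hsum.congr_fun fun k => by ring).tsum_eq]
    field_simp

theorem TnStar_one_and_id (mu a b : ℝ) (hmu : 0 ≤ mu) (ha : 0 ≤ a) (hab : a ≤ b)
    (n : ℕ) (hn : 0 < n) (x : ℝ) (hx : 0 ≤ x) :
    TnStar mu a b n (fun _ => 1) x = 1 ∧
    TnStar mu a b n (fun t => t) x = (n / (n + b)) * x + (a + 1 / 2) / (n + b) :=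
  TnStar_one_and_id_general mu a b hmu n hn x hx
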